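/- arXiv:2508.21658 — 2 statements merged into one kernel-verified Lean document; each statement's English description precedes it below -/
import Mathlib

section
/- Let (Ω, F, μ) be a measure space and (B_q)_{q∈ℕ} a decreasing sequence of measurable sets (B_{q+1} ⊆ B_q) with Σ_{q=1}^∞ q·μ(B_q) < ∞. Then the function f = Σ_{q=1}^∞ 1_{B_q} belongs to L²(μ), with ∫ f² dμ ≤ 2 Σ_{q=1}^∞ q·μ(B_q). -/
open MeasureTheory ENNReal

lemma aux_pointwise (a : ℕ → ℝ≥0∞) (h01 : ∀ q, a q = 0 ∨ a q = 1)
    (hant : ∀ q, a (q + 1) ≤ a q) :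
    (∑' q, a q) ^ 2 ≤ 2 * ∑' q, ((q + 1 : ℕ) : ℝ≥0∞) * a q := by
  have hanti : Antitone a := antitone_nat_of_succ_le hant
  by_cases h : ∃ N, a N = 0
  · classical
    set N := Nat.find h with hN
    have hzero : ∀ q, N ≤ q → a q = 0 := by
      intro q hq
      exact le_antisymm ((hanti hq).trans (Nat.find_spec h).le) bot_le
    have hone : ∀ q, q < N → a q = 1 := by
      intro q hq
      rcases h01 q with h0 | h1
      · exact absurd h0 (Nat.find_min h hq)
      · exact h1
    have hsum1 : ∑' q, a q = (N : ℝ≥0∞) := by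
      rw [tsum_eq_sum (s := Finset.range N) (fun q hq => hzero q (by simpa using hq))]
      rw [Finset.sum_congr rfl (fun q hq => hone q (Finset.mem_range.mp hq))]
      simp
    have hsum2 : ∑' q, ((q + 1 : ℕ) : ℝ≥0∞) * a q
        = ((∑ q ∈ Finset.range N, (q + 1) : ℕ) : ℝ≥0∞) := by
      rw [tsum_eq_sum (s := Finset.range N)
        (fun q hq => by rw [hzero q (by simpa using hq), mul_zero])]
      push_cast
      refine Finset.sum_congr rfl (fun q hq => ?_)
      rw [hone q (Finset.mem_range.mp hq), mul_one]
    rw [hsum1, hsum2]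
    have hnat : N ^ 2 ≤ 2 * ∑ q ∈ Finset.range N, (q + 1) := by
      have : ∑ q ∈ Finset.range N, (q + 1) = ∑ i ∈ Finset.range (N + 1), i := by
        rw [Finset.sum_range_succ' (fun i => i) N]
        simp [add_comm]
      rw [this]
      have hg : (∑ i ∈ Finset.range (N + 1), i) * 2 = (N + 1) * N := by
        simpa using Finset.sum_range_id_mul_two (N + 1)
      nlinarith [hg]
    calc ((N : ℝ≥0∞)) ^ 2 = ((N ^ 2 : ℕ) : ℝ≥0∞) := by push_cast; ring
      _ ≤ ((2 * ∑ q ∈ Finset.range N, (q + 1) : ℕ) : ℝ≥0∞) := by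
          exact_mod_cast Nat.cast_le.mpr hnat
      _ = 2 * ((∑ q ∈ Finset.range N, (q + 1) : ℕ) : ℝ≥0∞) := by push_cast; ring
  · push_neg at h
    have hone : ∀ q, a q = 1 := fun q => (h01 q).resolve_left (h q)
    have htop : ∑' q, ((q + 1 : ℕ) : ℝ≥0∞) * a q = ⊤ := by
      refine top_unique ?_
      calc (⊤ : ℝ≥0∞) = ∑' _ : ℕ, (1 : ℝ≥0∞) := by
            simp [ENNReal.tsum_const_eq_top_of_ne_zero]
        _ ≤ ∑' q, ((q + 1 : ℕ) : ℝ≥0∞) * a q := by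
            refine ENNReal.tsum_le_tsum (fun q => ?_)
            rw [hone q, mul_one]
            exact_mod_cast Nat.one_le_iff_ne_zero.mpr (Nat.succ_ne_zero q)
    rw [htop]
    simp

/-- If `(B_q)_{q ≥ 1}` is a decreasing sequence of measurable sets with
`Σ_{q≥1} q·μ(B_q) < ∞`, then `f = Σ_{q≥1} 1_{B_q}` belongs to `L²(μ)`, with
`∫ f² dμ ≤ 2 Σ_{q≥1} q·μ(B_q)`. (Sets are indexed so that `B (q+1)` is the
`(q+1)`-st set, `q = 0, 1, 2, …`.) -/
theorem stmt_11 {Ω : Type*} [MeasurableSpace Ω] (μ : Measure Ω) (B : ℕ → Set Ω)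
    (hmeas : ∀ q, MeasurableSet (B q))
    (hdec : ∀ q, B (q + 2) ⊆ B (q + 1))
    (hsum : ∑' q : ℕ, ((q + 1 : ℕ) : ℝ≥0∞) * μ (B (q + 1)) ≠ ⊤) :
    (∫⁻ ω, (∑' q : ℕ, (B (q + 1)).indicator (fun _ => (1 : ℝ≥0∞)) ω) ^ 2 ∂μ)
        ≤ 2 * ∑' q : ℕ, ((q + 1 : ℕ) : ℝ≥0∞) * μ (B (q + 1)) ∧
      (∫⁻ ω, (∑' q : ℕ, (B (q + 1)).indicator (fun _ => (1 : ℝ≥0∞)) ω) ^ 2 ∂μ) < ⊤ := by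
  have key : (∫⁻ ω, (∑' q : ℕ, (B (q + 1)).indicator (fun _ => (1 : ℝ≥0∞)) ω) ^ 2 ∂μ)
      ≤ 2 * ∑' q : ℕ, ((q + 1 : ℕ) : ℝ≥0∞) * μ (B (q + 1)) := by
    have hpt : ∀ ω, (∑' q : ℕ, (B (q + 1)).indicator (fun _ => (1 : ℝ≥0∞)) ω) ^ 2
        ≤ ∑' q : ℕ, ((q + 1 : ℕ) : ℝ≥0∞) * (B (q + 1)).indicator (fun _ => (1 : ℝ≥0∞)) ω
          * 2 := by
      intro ω
      have := aux_pointwise (fun q => (B (q + 1)).indicator (fun _ => (1 : ℝ≥0∞)) ω)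
        (fun q => by by_cases hω : ω ∈ B (q + 1) <;> simp [Set.indicator, hω])
        (fun q => by
          by_cases hω : ω ∈ B (q + 2)
          · simp [Set.indicator, hω, hdec q hω]
          · simp [Set.indicator, hω])
      calc (∑' q : ℕ, (B (q + 1)).indicator (fun _ => (1 : ℝ≥0∞)) ω) ^ 2
          ≤ 2 * ∑' q : ℕ, ((q + 1 : ℕ) : ℝ≥0∞)
              * (B (q + 1)).indicator (fun _ => (1 : ℝ≥0∞)) ω := this
        _ = _ := by rw [mul_comm, ENNReal.tsum_mul_right]
    calc (∫⁻ ω, (∑' q : ℕ, (B (q + 1)).indicator (fun _ => (1 : ℝ≥0∞)) ω) ^ 2 ∂μ)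
        ≤ ∫⁻ ω, (∑' q : ℕ, ((q + 1 : ℕ) : ℝ≥0∞)
            * (B (q + 1)).indicator (fun _ => (1 : ℝ≥0∞)) ω) * 2 ∂μ := by
          refine lintegral_mono (fun ω => ?_)
          simpa [ENNReal.tsum_mul_right] using hpt ω
      _ = (∫⁻ ω, ∑' q : ℕ, ((q + 1 : ℕ) : ℝ≥0∞)
            * (B (q + 1)).indicator (fun _ => (1 : ℝ≥0∞)) ω ∂μ) * 2 := by
          rw [lintegral_mul_const' _ _ (by norm_num)]
      _ = (∑' q : ℕ, ∫⁻ ω, ((q + 1 : ℕ) : ℝ≥0∞)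
            * (B (q + 1)).indicator (fun _ => (1 : ℝ≥0∞)) ω ∂μ) * 2 := by
          rw [lintegral_tsum (fun q => ((measurable_const.indicator (hmeas (q+1))).const_mul
            _).aemeasurable)]
      _ = (∑' q : ℕ, ((q + 1 : ℕ) : ℝ≥0∞) * μ (B (q + 1))) * 2 := by
          congr 1
          refine tsum_congr (fun q => ?_)
          rw [lintegral_const_mul _ (measurable_const.indicator (hmeas (q+1))),
            show ((B (q+1)).indicator (fun _ => (1:ℝ≥0∞))) = (B (q+1)).indicator 1 from rfl,
            lintegral_indicator_one (hmeas (q+1))]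
      _ = 2 * ∑' q : ℕ, ((q + 1 : ℕ) : ℝ≥0∞) * μ (B (q + 1)) := mul_comm _ _
  exact ⟨key, lt_of_le_of_lt key (ENNReal.mul_lt_top (by norm_num) hsum.lt_top)⟩
end

section
/- Let m ∈ C²(ℝⁿ) be a strictly positive probability density and φ ∈ C_c^∞(ℝⁿ) with 0 ≤ φ ≤ 1 and φ > 0 implying |∇φ|²/φ bounded, and set A = ∫ φ |∇ log φ|² m dx (interpreted as ∫ (|∇φ|²/φ) m dx) and B = ∫ φ (−Δ log m) m dx. If B ≥ 0, then the localized Fisher information satisfies ∫ φ |∇ log m|² m dx ≤ (1/4)(√A + √(A + 4B))². -/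
open MeasureTheory

/-- The Laplacian of `log m`, `Δ(log m)(x) = Σᵢ ∂ᵢ²(log m)(x)`. -/
noncomputable def logLaplacian (n : ℕ) (m : EuclideanSpace ℝ (Fin n) → ℝ)
    (x : EuclideanSpace ℝ (Fin n)) : ℝ :=
  ∑ i : Fin n,
    fderiv ℝ (fun y => fderiv ℝ (fun z => Real.log (m z)) y (EuclideanSpace.single i 1))
      x (EuclideanSpace.single i 1)

open Real
open scoped RealInnerProductSpace

section Aux

lemma stmt15_quadratic {s a c b : ℝ} (hs : 0 ≤ s) (ha : 0 ≤ a) (hc : 0 ≤ c)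
    (hb : 0 ≤ b) (hc2 : c ^ 2 = a ^ 2 + 4 * b) (key : s ^ 2 ≤ a * s + b) :
    s ^ 2 ≤ (1 / 4) * (a + c) ^ 2 := by
  have hle : s ≤ (a + c) / 2 := by
    by_contra h
    push_neg at h
    nlinarith [mul_pos (sub_pos.2 h) (sub_pos.2 h)]
  nlinarith

lemma stmt15_inner_grad {n : ℕ} (f : EuclideanSpace ℝ (Fin n) → ℝ)
    (x v : EuclideanSpace ℝ (Fin n)) :
    ⟪gradient f x, v⟫ = fderiv ℝ f x v := by
  simp [gradient, InnerProductSpace.toDual_symm_apply]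

lemma stmt15_grad_apply {n : ℕ} (f : EuclideanSpace ℝ (Fin n) → ℝ) (x : EuclideanSpace ℝ (Fin n))
    (i : Fin n) : gradient f x i = fderiv ℝ f x (EuclideanSpace.single i 1) := by
  rw [← stmt15_inner_grad, EuclideanSpace.inner_single_right]
  simp

lemma stmt15_norm_grad_sq {n : ℕ} (f : EuclideanSpace ℝ (Fin n) → ℝ)
    (x : EuclideanSpace ℝ (Fin n)) :
    ‖gradient f x‖ ^ 2 = ∑ i, (fderiv ℝ f x (EuclideanSpace.single i 1)) ^ 2 := by
  rw [EuclideanSpace.norm_eq, Real.sq_sqrt (by positivity)]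
  simp [sq_abs, stmt15_grad_apply]

lemma stmt15_inner_grad_sum {n : ℕ} (f g : EuclideanSpace ℝ (Fin n) → ℝ)
    (x : EuclideanSpace ℝ (Fin n)) :
    ⟪gradient f x, gradient g x⟫
      = ∑ i, fderiv ℝ f x (EuclideanSpace.single i 1)
          * fderiv ℝ g x (EuclideanSpace.single i 1) := by
  rw [PiLp.inner_apply]
  simp [stmt15_grad_apply, mul_comm]

end Aux

set_option maxHeartbeats 4000000 in
/-- Localized Fisher-information bound: for a strictly positive `C²` probability
density `m` and a cut-off `φ ∈ C_c^∞` with `0 ≤ φ ≤ 1` and `|∇φ|²/φ` bounded, set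
`A = ∫ (|∇φ|²/φ) m dx` and `B = ∫ φ (-Δ log m) m dx`. If `B ≥ 0`, then
`∫ φ |∇log m|² m dx ≤ (1/4)(√A + √(A + 4B))²`. -/
theorem stmt_15 (n : ℕ) (m : EuclideanSpace ℝ (Fin n) → ℝ)
    (hm : ContDiff ℝ 2 m) (hpos : ∀ x, 0 < m x)
    (hint : Integrable m volume) (hprob : ∫ x, m x = 1)
    (φ : EuclideanSpace ℝ (Fin n) → ℝ)
    (hφ : ContDiff ℝ (⊤ : ℕ∞) φ) (hsupp : HasCompactSupport φ)
    (hφ0 : ∀ x, 0 ≤ φ x) (hφ1 : ∀ x, φ x ≤ 1)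
    (hbd : ∃ Cφ : ℝ, ∀ x, ‖gradient φ x‖ ^ 2 ≤ Cφ * φ x)
    (A B : ℝ)
    (hA : A = ∫ x, (‖gradient φ x‖ ^ 2 / φ x) * m x)
    (hB : B = ∫ x, φ x * (-(logLaplacian n m x)) * m x)
    (hBpos : 0 ≤ B) :
    ∫ x, φ x * ‖gradient (fun z => Real.log (m z)) x‖ ^ 2 * m x
      ≤ (1 / 4) * (Real.sqrt A + Real.sqrt (A + 4 * B)) ^ 2 := by
  obtain ⟨Cφ, hCφ⟩ := hbd
  set L : EuclideanSpace ℝ (Fin n) → ℝ := fun z => Real.log (m z) with hLdef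
  set e : Fin n → EuclideanSpace ℝ (Fin n) := fun i => EuclideanSpace.single i 1 with hedef
  have he : ∀ i, EuclideanSpace.single i (1:ℝ) = e i := fun _ => rfl
  have hm1 : Differentiable ℝ m := hm.differentiable two_ne_zero
  have hmc : Continuous m := hm.continuous
  have hφc : Continuous φ := hφ.continuous
  have hφ1' : ContDiff ℝ 1 φ := hφ.of_le (by simp)
  have hφd : Differentiable ℝ φ := hφ1'.differentiable one_ne_zero
  have hL : ContDiff ℝ 2 L := hm.log fun x => (hpos x).ne'
  have hLd : Differentiable ℝ L := hL.differentiable two_ne_zero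
  -- first derivatives of L
  have hDL : ∀ i, ContDiff ℝ 1 fun x => fderiv ℝ L x (e i) := fun i =>
    (hL.fderiv_right (m := 1) (by norm_num)).clm_apply contDiff_const
  have hDLc : ∀ i, Continuous fun x => fderiv ℝ L x (e i) := fun i => (hDL i).continuous
  have hDφc : ∀ i, Continuous fun x => fderiv ℝ φ x (e i) := fun i =>
    ((hφ.fderiv_right (m := 1) (WithTop.coe_le_coe.2 (le_top : ((1 + 1 : ℕ) : ℕ∞) ≤ ⊤))).clm_apply contDiff_const).continuous
  have hD2c : ∀ i, Continuous fun x => fderiv ℝ (fun y => fderiv ℝ L y (e i)) x (e i) := fun i =>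
    (((hDL i).fderiv_right (m := 0) (by norm_num)).clm_apply contDiff_const).continuous
  -- m * ∂ᵢL = ∂ᵢm
  have hfd : ∀ (x : EuclideanSpace ℝ (Fin n)) v, fderiv ℝ m x v = m x * fderiv ℝ L x v := by
    intro x v
    have h1 : fderiv ℝ L x = (m x)⁻¹ • fderiv ℝ m x :=
      ((Real.hasDerivAt_log (hpos x).ne').comp_hasFDerivAt x (hm1 x).hasFDerivAt).fderiv
    rw [h1]
    simp only [ContinuousLinearMap.coe_smul', Pi.smul_apply, smul_eq_mul, ← mul_assoc,
      mul_inv_cancel₀ (hpos x).ne', one_mul]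
  -- integrability helper
  have intCpt : ∀ f : EuclideanSpace ℝ (Fin n) → ℝ,
      Continuous f → HasCompactSupport f → Integrable f volume := fun f hc hs =>
    hc.integrable_of_hasCompactSupport hs
  -- gradient continuity
  have hgradLc : Continuous (gradient L) := by
    unfold gradient
    exact (InnerProductSpace.toDual ℝ _).symm.continuous.comp
      ((hL.fderiv_right (m := 1) (by norm_num)).continuous)
  have hgradφc : Continuous (gradient φ) := by
    unfold gradient
    exact (InnerProductSpace.toDual ℝ _).symm.continuous.comp
      ((hφ.fderiv_right (m := 1) (WithTop.coe_le_coe.2 (le_top : ((1 + 1 : ℕ) : ℕ∞) ≤ ⊤))).continuous)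
  -- the localized Fisher information
  set I : ℝ := ∫ x, φ x * ‖gradient L x‖ ^ 2 * m x with hIdef
  have hI0 : 0 ≤ I := integral_nonneg fun x =>
    mul_nonneg (mul_nonneg (hφ0 x) (sq_nonneg _)) (hpos x).le
  have hA0 : 0 ≤ A := by
    rw [hA]
    exact integral_nonneg fun x =>
      mul_nonneg (div_nonneg (sq_nonneg _) (hφ0 x)) (hpos x).le
  -- key integrabilities
  have intP : ∀ i, Integrable (fun x => φ x * (fderiv ℝ L x (e i)) ^ 2 * m x) volume := fun i =>
    intCpt _ ((hφc.mul ((hDLc i).pow 2)).mul hmc) (hsupp.mul_right.mul_right)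
  have intQ : ∀ i, Integrable (fun x => fderiv ℝ φ x (e i) * fderiv ℝ L x (e i) * m x) volume :=
    fun i => intCpt _ (((hDφc i).mul (hDLc i)).mul hmc)
      ((((hsupp.fderiv ℝ).comp_left (g := fun T : _ →L[ℝ] ℝ => T (e i)) rfl)).mul_right.mul_right)
  have intR : ∀ i, Integrable
      (fun x => φ x * (fderiv ℝ (fun y => fderiv ℝ L y (e i)) x (e i)) * m x) volume := fun i =>
    intCpt _ ((hφc.mul (hD2c i)).mul hmc) (hsupp.mul_right.mul_right)
  -- integration by parts, coordinatewise
  have claim1 : ∀ i, (∫ x, φ x * (fderiv ℝ L x (e i)) ^ 2 * m x)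
      = -(∫ x, fderiv ℝ φ x (e i) * fderiv ℝ L x (e i) * m x)
        - ∫ x, φ x * (fderiv ℝ (fun y => fderiv ℝ L y (e i)) x (e i)) * m x := by
    intro i
    set fi : EuclideanSpace ℝ (Fin n) → ℝ := fun x => φ x * fderiv ℝ L x (e i) with hfidef
    have hfi : ContDiff ℝ 1 fi := hφ1'.mul (hDL i)
    have hfid : Differentiable ℝ fi := hfi.differentiable one_ne_zero
    have hfis : HasCompactSupport fi := hsupp.mul_right
    have hdfi : ∀ x, fderiv ℝ fi x (e i)
        = fderiv ℝ φ x (e i) * fderiv ℝ L x (e i)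
          + φ x * fderiv ℝ (fun y => fderiv ℝ L y (e i)) x (e i) := by
      intro x
      have h := fderiv_mul (𝕜 := ℝ) (x := x) (hφd x) (((hDL i).differentiable one_ne_zero) x)
      have h2 : fderiv ℝ fi x
          = φ x • fderiv ℝ (fun y => fderiv ℝ L y (e i)) x
            + fderiv ℝ L x (e i) • fderiv ℝ φ x := h
      rw [h2]
      simp only [ContinuousLinearMap.add_apply, ContinuousLinearMap.coe_smul', Pi.smul_apply,
        smul_eq_mul]
      ring
    have hdfic : Continuous fun x => fderiv ℝ fi x (e i) :=
      (((hfi.fderiv_right (m := 0) (by norm_num)).clm_apply contDiff_const)).continuous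
    have hdfis : HasCompactSupport fun x => fderiv ℝ fi x (e i) :=
      (hfis.fderiv ℝ).comp_left (g := fun T : _ →L[ℝ] ℝ => T (e i)) rfl
    have h1 : Integrable (fun x => fderiv ℝ fi x (e i) * m x) volume :=
      intCpt _ (hdfic.mul hmc) hdfis.mul_right
    have h2 : Integrable (fun x => fi x * fderiv ℝ m x (e i)) volume :=
      intCpt _ (hfi.continuous.mul (((hm.fderiv_right (m := 1) (by norm_num)).clm_apply
        contDiff_const).continuous)) hfis.mul_right
    have h3 : Integrable (fun x => fi x * m x) volume :=
      intCpt _ (hfi.continuous.mul hmc) hfis.mul_right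
    have ibp := integral_mul_fderiv_eq_neg_fderiv_mul_of_integrable h1 h2 h3 (fun x _ => hfid x) (fun x _ => hm1 x)
    have lhs_eq : (∫ x, fi x * fderiv ℝ m x (e i))
        = ∫ x, φ x * (fderiv ℝ L x (e i)) ^ 2 * m x := by
      refine integral_congr_ae (Filter.Eventually.of_forall fun x => ?_)
      show fi x * fderiv ℝ m x (e i) = _
      rw [hfd x (e i), hfidef]
      ring
    have rhs_eq : (∫ x, fderiv ℝ fi x (e i) * m x)
        = (∫ x, fderiv ℝ φ x (e i) * fderiv ℝ L x (e i) * m x)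
          + ∫ x, φ x * (fderiv ℝ (fun y => fderiv ℝ L y (e i)) x (e i)) * m x := by
      rw [← integral_add (intQ i) (intR i)]
      refine integral_congr_ae (Filter.Eventually.of_forall fun x => ?_)
      show fderiv ℝ fi x (e i) * m x = _
      rw [hdfi x]; ring
    rw [← lhs_eq, ibp, rhs_eq]
    ring
  -- rewrite `I` as a sum of coordinatewise integrals
  have claim2 : I = ∑ i, ∫ x, φ x * (fderiv ℝ L x (e i)) ^ 2 * m x := by
    have hpt : ∀ x : EuclideanSpace ℝ (Fin n), φ x * ‖gradient L x‖ ^ 2 * m x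
        = ∑ i, φ x * (fderiv ℝ L x (e i)) ^ 2 * m x := by
      intro x
      rw [stmt15_norm_grad_sq]
      simp only [he]
      rw [Finset.mul_sum, Finset.sum_mul]
    rw [hIdef]
    simp_rw [hpt]
    exact integral_finset_sum _ fun i _ => intP i
  set G : EuclideanSpace ℝ (Fin n) → ℝ := fun x => ⟪gradient φ x, gradient L x⟫ with hGdef
  have hGc : Continuous G := hgradφc.inner hgradLc
  have claim3 : (∑ i, ∫ x, fderiv ℝ φ x (e i) * fderiv ℝ L x (e i) * m x)
      = ∫ x, G x * m x := by
    have hpt : ∀ x : EuclideanSpace ℝ (Fin n), ⟪gradient φ x, gradient L x⟫ * m x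
        = ∑ i, fderiv ℝ φ x (e i) * fderiv ℝ L x (e i) * m x := by
      intro x
      rw [stmt15_inner_grad_sum]
      simp only [he]
      rw [Finset.sum_mul]
    rw [← integral_finset_sum _ fun i _ => intQ i]
    refine (integral_congr_ae (Filter.Eventually.of_forall fun x => ?_)).symm
    exact hpt x
  have claim4 : (∑ i, ∫ x, φ x * (fderiv ℝ (fun y => fderiv ℝ L y (e i)) x (e i)) * m x)
      = -B := by
    have hpt : ∀ x : EuclideanSpace ℝ (Fin n),
        (∑ i, φ x * (fderiv ℝ (fun y => fderiv ℝ L y (e i)) x (e i)) * m x)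
          = -(φ x * (-(logLaplacian n m x)) * m x) := by
      intro x
      simp only [logLaplacian, ← hLdef, he, neg_mul, mul_neg, neg_neg, Finset.mul_sum,
        Finset.sum_mul]
    rw [← integral_finset_sum _ fun i _ => intR i, hB, ← integral_neg]
    refine integral_congr_ae (Filter.Eventually.of_forall fun x => ?_)
    exact hpt x
  have main_eq : I = -(∫ x, G x * m x) + B := by
    rw [claim2, Finset.sum_congr rfl fun i _ => claim1 i, Finset.sum_sub_distrib,
      Finset.sum_neg_distrib, claim3, claim4]
    ring
  -- Cauchy–Schwarz step
  have hgradφs : HasCompactSupport (gradient φ) := by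
    unfold gradient
    exact (hsupp.fderiv ℝ).comp_left (map_zero _)
  have hGs : HasCompactSupport G := by
    refine HasCompactSupport.intro hgradφs ?_
    intro x hx
    have : gradient φ x = 0 := image_eq_zero_of_notMem_tsupport hx
    simp [hGdef, this]
  have intGm : Integrable (fun x => G x * m x) volume := intCpt _ (hGc.mul hmc) hGs.mul_right
  have hgphi0 : ∀ x, φ x = 0 → ‖gradient φ x‖ ^ 2 = 0 := fun x h =>
    le_antisymm (by simpa [h] using hCφ x) (sq_nonneg _)
  set u : EuclideanSpace ℝ (Fin n) → ℝ :=
    fun x => Real.sqrt ((‖gradient φ x‖ ^ 2 / φ x) * m x) with hudef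
  set v : EuclideanSpace ℝ (Fin n) → ℝ :=
    fun x => Real.sqrt (φ x * ‖gradient L x‖ ^ 2 * m x) with hvdef
  have hu0 : ∀ x, 0 ≤ u x := fun x => Real.sqrt_nonneg _
  have hv0 : ∀ x, 0 ≤ v x := fun x => Real.sqrt_nonneg _
  have hu2 : ∀ x, u x ^ 2 = (‖gradient φ x‖ ^ 2 / φ x) * m x := fun x =>
    Real.sq_sqrt (mul_nonneg (div_nonneg (sq_nonneg _) (hφ0 x)) (hpos x).le)
  have hv2 : ∀ x, v x ^ 2 = φ x * ‖gradient L x‖ ^ 2 * m x := fun x =>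
    Real.sq_sqrt (mul_nonneg (mul_nonneg (hφ0 x) (sq_nonneg _)) (hpos x).le)
  have humeas : AEStronglyMeasurable u volume := by
    refine (Real.continuous_sqrt.measurable.comp ?_).aestronglyMeasurable
    exact (((hgradφc.norm.pow 2).measurable.div hφc.measurable).mul hmc.measurable)
  have hvc : Continuous v :=
    Real.continuous_sqrt.comp ((hφc.mul (hgradLc.norm.pow 2)).mul hmc)
  have hvs : HasCompactSupport v :=
    (hsupp.mul_right.mul_right).comp_left Real.sqrt_zero
  have intu2 : Integrable (fun x => u x ^ 2) volume := by
    simp_rw [hu2]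
    refine (hint.const_mul (max Cφ 0)).mono'
      ((((hgradφc.norm.pow 2).measurable.div hφc.measurable).mul
        hmc.measurable).aestronglyMeasurable)
      (Filter.Eventually.of_forall fun x => ?_)
    rw [Real.norm_of_nonneg (mul_nonneg (div_nonneg (sq_nonneg _) (hφ0 x)) (hpos x).le)]
    rcases eq_or_lt_of_le (hφ0 x) with h | h
    · rw [← h, div_zero, zero_mul]
      exact mul_nonneg (le_max_right _ _) (hpos x).le
    · have hle : ‖gradient φ x‖ ^ 2 / φ x ≤ Cφ := (div_le_iff₀ h).2 (by linarith [hCφ x])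
      exact mul_le_mul_of_nonneg_right (hle.trans (le_max_left _ _)) (hpos x).le
  have intv2 : Integrable (fun x => v x ^ 2) volume := by
    simp_rw [hv2]
    exact intCpt _ ((hφc.mul (hgradLc.norm.pow 2)).mul hmc) (hsupp.mul_right.mul_right)
  have hu2int : (∫ x, u x ^ 2) = A := by
    rw [hA]; exact integral_congr_ae (Filter.Eventually.of_forall fun x => hu2 x)
  have hv2int : (∫ x, v x ^ 2) = I := by
    rw [hIdef]; exact integral_congr_ae (Filter.Eventually.of_forall fun x => hv2 x)
  have memu : MemLp u 2 volume := (memLp_two_iff_integrable_sq humeas).2 intu2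
  have memv : MemLp v 2 volume :=
    (memLp_two_iff_integrable_sq hvc.aestronglyMeasurable).2 intv2
  have CS : (∫ x, u x * v x) ≤ Real.sqrt A * Real.sqrt I := by
    have h22 : Real.HolderConjugate 2 2 := Real.HolderConjugate.two_two
    have hCS := integral_mul_le_Lp_mul_Lq_of_nonneg h22
      (Filter.Eventually.of_forall hu0) (Filter.Eventually.of_forall hv0)
      (by simpa using memu) (by simpa using memv)
    have e2 : ∀ t : ℝ, t ^ (2:ℝ) = t ^ 2 := fun t => by
      rw [show (2:ℝ) = ((2:ℕ):ℝ) by norm_num, Real.rpow_natCast]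
    simp_rw [e2] at hCS
    rw [hu2int, hv2int, ← Real.sqrt_eq_rpow, ← Real.sqrt_eq_rpow] at hCS
    exact hCS
  have intuv : Integrable (fun x => u x * v x) volume := by
    refine ((intu2.add intv2).div_const 2).mono'
      (humeas.mul hvc.aestronglyMeasurable)
      (Filter.Eventually.of_forall fun x => ?_)
    simp only [Pi.add_apply]
    rw [Real.norm_of_nonneg (mul_nonneg (hu0 x) (hv0 x))]
    nlinarith [sq_nonneg (u x - v x)]
  have pointwise : ∀ x, -(G x * m x) ≤ u x * v x := by
    intro x
    have h1 : |G x| ≤ ‖gradient φ x‖ * ‖gradient L x‖ := abs_real_inner_le_norm _ _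
    have h2 : ‖gradient φ x‖ ^ 2 ≤ (‖gradient φ x‖ ^ 2 / φ x) * φ x := by
      rcases eq_or_lt_of_le (hφ0 x) with h | h
      · rw [← h, mul_zero, hgphi0 x h.symm]
      · rw [div_mul_cancel₀ _ h.ne']
    have h3 : ‖gradient φ x‖ * ‖gradient L x‖ * m x ≤ u x * v x := by
      have huv : u x * v x = Real.sqrt (((‖gradient φ x‖ ^ 2 / φ x) * m x)
          * (φ x * ‖gradient L x‖ ^ 2 * m x)) :=
        (Real.sqrt_mul (mul_nonneg (div_nonneg (sq_nonneg _) (hφ0 x)) (hpos x).le) _).symm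
      rw [huv, ← Real.sqrt_sq (mul_nonneg (mul_nonneg (norm_nonneg _) (norm_nonneg _)) (hpos x).le : (0:ℝ) ≤ ‖gradient φ x‖ * ‖gradient L x‖ * m x)]
      apply Real.sqrt_le_sqrt
      have hmul := mul_le_mul_of_nonneg_right h2
        (mul_nonneg (sq_nonneg ‖gradient L x‖) (sq_nonneg (m x)))
      nlinarith [hmul]
    calc -(G x * m x) = (-G x) * m x := by ring
      _ ≤ |G x| * m x := mul_le_mul_of_nonneg_right (neg_le_abs _) (hpos x).le
      _ ≤ ‖gradient φ x‖ * ‖gradient L x‖ * m x :=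
          mul_le_mul_of_nonneg_right h1 (hpos x).le
      _ ≤ u x * v x := h3
  have step : -(∫ x, G x * m x) ≤ Real.sqrt A * Real.sqrt I := by
    rw [← integral_neg]
    exact (integral_mono intGm.neg intuv pointwise).trans CS
  have key : I ≤ Real.sqrt A * Real.sqrt I + B := by
    linarith [main_eq, step]
  have final := stmt15_quadratic (s := Real.sqrt I) (a := Real.sqrt A)
    (c := Real.sqrt (A + 4 * B)) (b := B) (Real.sqrt_nonneg _) (Real.sqrt_nonneg _)
    (Real.sqrt_nonneg _) hBpos
    (by rw [Real.sq_sqrt (by linarith), Real.sq_sqrt hA0])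
    (by rw [Real.sq_sqrt hI0]; exact key)
  rw [Real.sq_sqrt hI0] at final
  exact final
end
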